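/- arXiv:1210.2251 — 4 statements merged into one kernel-verified Lean document; each statement's English description precedes it below -/
import Mathlib

section
/- For t ≥ 0 let C_t = { x ∈ A : (dF/dF̃)(x) ≥ t }. For every δ > 0 the following two-sided bound holds: sup{ J₊(C_t) : t > 0 with F(C_t) ≤ δ } ≤ inf{ J₊(C) : C ⊆ A measurable with F(C) ≥ δ } ≤ inf{ J₊(C_t) : t ≥ 0 with F(C_t) ≥ δ }. -/
open MeasureTheory Filter Topology ENNReal
open scoped Classical

noncomputable section

/-- Relative entropy (Kullback–Leibler divergence) `H(G ∣ μ) = ∫ log(dG/dμ) dG` when `G ≪ μ`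
(and the integrand is `G`-integrable), `+∞` otherwise. -/
def KL {X : Type*} [MeasurableSpace X] (G μ : Measure X) : ℝ≥0∞ :=
  if G ≪ μ ∧ Integrable (fun x => Real.log ((G.rnDeriv μ) x).toReal) G then
    ENNReal.ofReal (∫ x, Real.log ((G.rnDeriv μ) x).toReal ∂G)
  else ⊤

/-- The product `w·f` of the weight function `w = (dF/dF̃)·1_A` and the importance
function `f = 1_A`. -/
def wf {X : Type*} [MeasurableSpace X] (F Ftil : Measure X) (A : Set X) : X → ℝ :=
  Set.indicator A fun y => ((F.rnDeriv Ftil) y).toReal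

/-- `G ∈ Γ ∩ Δ`: `G` is a probability measure with `∫ w f dG < ∞` and `H(G∣F̃) < ∞`. -/
def memGammaDelta {X : Type*} [MeasurableSpace X] (F Ftil : Measure X) (A : Set X)
    (G : Measure X) : Prop :=
  IsProbabilityMeasure G ∧ (∫⁻ x, ENNReal.ofReal (wf F Ftil A x) ∂G) ≠ ⊤ ∧ KL G Ftil ≠ ⊤

/-- `J₊(C)`, with `inf ∅ = ∞`. -/
def Jplus {X : Type*} [MeasurableSpace X] (F Ftil : Measure X) (A : Set X) (ε : ℝ)
    (C : Set X) : ℝ≥0∞ :=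
  sInf { r | ∃ G : Measure X, memGammaDelta F Ftil A G ∧
    (∀ᵐ x ∂Ftil, x ∈ C → 1 + ε ≤ ((G.rnDeriv Ftil) x).toReal) ∧ r = KL G Ftil }

/-- The likelihood-ratio level set `C_t = {x ∈ A : dF/dF̃(x) ≥ t}`. -/
def Ct {X : Type*} [MeasurableSpace X] (F Ftil : Measure X) (A : Set X) (t : ℝ) : Set X :=
  {x ∈ A | ENNReal.ofReal t ≤ (F.rnDeriv Ftil) x}


/-!
The level set `C_t` is the Neyman–Pearson optimal test: among subsets `C ⊆ A` with
`F(C) ≥ F(C_t)` it has the smallest `F̃`-mass. On the other hand `J₊(C)` depends on `C` only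
through `q = F̃(C)`: it is `+∞` if `(1+ε)q > 1`, and otherwise equals the binary divergence
`KL(Ber((1+ε)q) ∣ Ber(q))`. The lower bound is the data-processing inequality for the partition
`{C, Cᶜ}` combined with the constraint `G(C) ≥ (1+ε)q`; it is attained by the density equal to
`1+ε` on `C` and constant on `Cᶜ`. Since this divergence is nondecreasing in `q`, `J₊` is monotone
in `F̃(C)`, which gives the first inequality; the second one holds because `C_t` is itself a
competitor.
-/

open InformationTheory Set

lemma monotoneOn_klFun : MonotoneOn klFun (Ici 1) := by
  refine monotoneOn_of_deriv_nonneg (convex_Ici 1) continuous_klFun.continuousOn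
    (fun x hx => ?_) fun x hx => ?_
  all_goals rw [interior_Ici] at hx
  · exact (hasDerivAt_klFun (by linarith [mem_Ioi.1 hx])).differentiableAt.differentiableWithinAt
  · rw [deriv_klFun]
    exact Real.log_nonneg hx.le

lemma antitoneOn_klFun : AntitoneOn klFun (Icc 0 1) := by
  refine antitoneOn_of_deriv_nonpos (convex_Icc 0 1) continuous_klFun.continuousOn
    (fun x hx => ?_) fun x hx => ?_
  all_goals rw [interior_Icc] at hx
  · exact (hasDerivAt_klFun hx.1.ne').differentiableAt.differentiableWithinAt
  · rw [deriv_klFun]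
    exact Real.log_nonpos hx.1.le hx.2.le

lemma klFun_add_mul_log_le {a r : ℝ} (ha : 0 < a) (hr : 0 < r) :
    klFun r + (a - r) * Real.log r ≤ klFun a := by
  have h := Real.log_le_sub_one_of_pos (div_pos hr ha)
  rw [Real.log_div hr.ne' ha.ne'] at h
  have h' : a * (Real.log r - Real.log a) ≤ r - a :=
    calc a * (Real.log r - Real.log a) ≤ a * (r / a - 1) := mul_le_mul_of_nonneg_left h ha.le
      _ = r - a := by field_simp
  simp only [klFun_apply]
  linarith

/-- `KL(Ber p ∣ Ber q)`, written as the `klFun`-divergence `∑ q_i klFun (p_i / q_i)`. -/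
def binaryKL (p q : ℝ) : ℝ := q * klFun (p / q) + (1 - q) * klFun ((1 - p) / (1 - q))

lemma monotoneOn_binaryKL_left {q : ℝ} (hq0 : 0 < q) (hq1 : q < 1) :
    MonotoneOn (binaryKL · q) (Icc q 1) := by
  intro p hp p' hp' hpp'
  have h1q : 0 < 1 - q := by linarith
  have hmono : klFun (p / q) ≤ klFun (p' / q) :=
    monotoneOn_klFun (by simpa [one_le_div hq0] using hp.1)
      (by simpa [one_le_div hq0] using hp.1.trans hpp') (by gcongr)
  have hanti : klFun ((1 - p) / (1 - q)) ≤ klFun ((1 - p') / (1 - q)) := by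
    have hmem : ∀ r ∈ Icc q 1, (1 - r) / (1 - q) ∈ Icc 0 1 := fun r hr =>
      ⟨div_nonneg (by linarith [hr.2]) h1q.le, (div_le_one h1q).2 (by linarith [hr.1])⟩
    exact antitoneOn_klFun (hmem p' hp') (hmem p hp) (by gcongr)
  simp only [binaryKL]
  gcongr

lemma binaryKL_mul_self_eq (a q : ℝ) :
    binaryKL (a * q) q = q * klFun a + (1 - q) * klFun ((1 - a * q) / (1 - q)) := by
  rcases eq_or_ne q 0 with rfl | hq
  · simp [binaryKL]
  · rw [binaryKL, mul_div_cancel_right₀ a hq]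

lemma monotoneOn_binaryKL_mul_self {a : ℝ} (ha : 1 < a) :
    MonotoneOn (fun q => binaryKL (a * q) q) (Icc 0 a⁻¹) := by
  have h1q : ∀ q ∈ Icc 0 a⁻¹, 0 < 1 - q := fun q hq =>
    sub_pos.2 (hq.2.trans_lt (inv_lt_one_of_one_lt₀ ha))
  have hr : ∀ q ∈ Ioo 0 a⁻¹, 0 < (1 - a * q) / (1 - q) := fun q hq => by
    have haq := mul_lt_mul_of_pos_left hq.2 (by positivity : 0 < a)
    rw [mul_inv_cancel₀ (by positivity)] at haq
    exact div_pos (by linarith) (h1q q (Ioo_subset_Icc_self hq))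
  -- with `r = (1 - a q) / (1 - q)`, the derivative is the Bregman gap of `klFun` between `a` and `r`
  have hderiv : ∀ q ∈ Ioo 0 a⁻¹,
      HasDerivAt (fun q => q * klFun a + (1 - q) * klFun ((1 - a * q) / (1 - q)))
        (klFun a - (klFun ((1 - a * q) / (1 - q))
          + (a - (1 - a * q) / (1 - q)) * Real.log ((1 - a * q) / (1 - q)))) q := by
    intro q hq
    have hq1 : 1 - q ≠ 0 := (h1q q (Ioo_subset_Icc_self hq)).ne'
    have := ((hasDerivAt_id q).mul_const (klFun a)).add (((hasDerivAt_id q).const_sub 1).mul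
      ((hasDerivAt_klFun (hr q hq).ne').comp q
        ((((hasDerivAt_id q).const_mul a).const_sub 1).div ((hasDerivAt_id q).const_sub 1) hq1)))
    refine this.congr_deriv ?_
    simp only [id, Function.comp_apply, Pi.div_apply]
    field_simp
    ring
  simp_rw [binaryKL_mul_self_eq]
  refine monotoneOn_of_deriv_nonneg (convex_Icc 0 a⁻¹) ?_ (fun q hq => ?_) fun q hq => ?_
  · have : ContinuousOn (fun q => (1 - a * q) / (1 - q)) (Icc 0 a⁻¹) :=
      ContinuousOn.div (by fun_prop) (by fun_prop) fun q hq => (h1q q hq).ne'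
    have := continuous_klFun.comp_continuousOn this
    fun_prop
  · rw [interior_Icc] at hq
    exact (hderiv q hq).differentiableAt.differentiableWithinAt
  · rw [interior_Icc] at hq
    rw [(hderiv q hq).deriv, sub_nonneg]
    exact klFun_add_mul_log_le (by linarith) (hr q hq)

section Divergence

variable {X : Type*} [MeasurableSpace X] {μ ν : Measure X} {s : Set X}

lemma KL_eq_klDiv [IsFiniteMeasure μ] [IsFiniteMeasure ν] (h : μ univ = ν univ) :
    KL μ ν = klDiv μ ν := by
  simp [KL, klDiv_def, llr_def, measureReal_def, h]

lemma absolutelyContinuous_of_KL_ne_top (h : KL μ ν ≠ ⊤) : μ ≪ ν := by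
  unfold KL at h
  split_ifs at h with hμν
  exacts [hμν.1, absurd rfl h]

lemma MeasureTheory.Measure.rnDeriv_restrict_restrict [SigmaFinite μ] [SigmaFinite ν]
    (hμν : μ ≪ ν) (hs : MeasurableSet s) :
    (μ.restrict s).rnDeriv (ν.restrict s) =ᵐ[ν.restrict s] μ.rnDeriv ν := by
  conv_lhs => rw [← Measure.withDensity_rnDeriv_eq μ ν hμν, restrict_withDensity hs]
  exact Measure.rnDeriv_withDensity _ (Measure.measurable_rnDeriv μ ν)

lemma mul_klFun_le_setIntegral_klFun_rnDeriv [IsFiniteMeasure μ] [IsFiniteMeasure ν]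
    (hμν : μ ≪ ν) (h_int : Integrable (llr μ ν) μ) (hs : MeasurableSet s) :
    ν.real s * klFun (μ.real s / ν.real s) ≤ ∫ x in s, klFun (μ.rnDeriv ν x).toReal ∂ν := by
  have h_ae : (fun x => klFun ((μ.restrict s).rnDeriv (ν.restrict s) x).toReal)
      =ᵐ[ν.restrict s] fun x => klFun (μ.rnDeriv ν x).toReal := by
    filter_upwards [Measure.rnDeriv_restrict_restrict hμν hs] with x hx
    rw [hx]
  have := mul_le_integral_rnDeriv_of_ac convexOn_klFun continuous_klFun.continuousWithinAt
    (((integrable_klFun_rnDeriv_iff hμν).2 h_int).restrict.congr h_ae.symm) (hμν.restrict s)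
  rwa [measureReal_restrict_apply_univ, measureReal_restrict_apply_univ,
    integral_congr_ae h_ae] at this

lemma ofReal_binaryKL_le_klDiv [IsProbabilityMeasure μ] [IsProbabilityMeasure ν]
    (hs : MeasurableSet s) :
    ENNReal.ofReal (binaryKL (μ.real s) (ν.real s)) ≤ klDiv μ ν := by
  by_cases h : μ ≪ ν ∧ Integrable (llr μ ν) μ
  swap
  · rw [klDiv_eq_top_iff.2 fun h₁ h₂ => h ⟨h₁, h₂⟩]
    exact le_top
  obtain ⟨hμν, h_int⟩ := h
  rw [← ENNReal.ofReal_toReal (klDiv_ne_top hμν h_int), toReal_klDiv_eq_integral_klFun hμν,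
    ← integral_add_compl hs ((integrable_klFun_rnDeriv_iff hμν).2 h_int), binaryKL,
    ← probReal_compl_eq_one_sub hs, ← probReal_compl_eq_one_sub hs]
  exact ENNReal.ofReal_le_ofReal <| add_le_add
    (mul_klFun_le_setIntegral_klFun_rnDeriv hμν h_int hs)
    (mul_klFun_le_setIntegral_klFun_rnDeriv hμν h_int hs.compl)

lemma mul_measureReal_le_of_le_rnDeriv [IsFiniteMeasure μ] [IsFiniteMeasure ν] {c : ℝ}
    (hμν : μ ≪ ν) (hs : MeasurableSet s) (h : ∀ᵐ x ∂ν, x ∈ s → c ≤ (μ.rnDeriv ν x).toReal) :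
    c * ν.real s ≤ μ.real s := by
  rw [← Measure.setIntegral_toReal_rnDeriv hμν s, mul_comm, ← smul_eq_mul, ← setIntegral_const]
  exact setIntegral_mono_ae_restrict (integrable_const _).integrableOn
    Measure.integrable_toReal_rnDeriv.integrableOn ((ae_restrict_iff' hs).2 h)

lemma lintegral_piecewise_const (hs : MeasurableSet s) (c d : ℝ≥0∞) :
    ∫⁻ x, s.piecewise (fun _ => c) (fun _ => d) x ∂ν = c * ν s + d * ν sᶜ := by
  rw [lintegral_piecewise hs, setLIntegral_const, setLIntegral_const]

lemma lintegral_piecewise_ofReal [IsProbabilityMeasure ν] (hs : MeasurableSet s) {a b : ℝ}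
    (ha : 0 ≤ a) (hb : 0 ≤ b) :
    ∫⁻ x, s.piecewise (fun _ => ENNReal.ofReal a) (fun _ => ENNReal.ofReal b) x ∂ν
      = ENNReal.ofReal (a * ν.real s + b * (1 - ν.real s)) := by
  rw [lintegral_piecewise_const hs, ← probReal_compl_eq_one_sub hs,
    ENNReal.ofReal_add (by positivity) (by positivity), ENNReal.ofReal_mul ha,
    ENNReal.ofReal_mul hb, ofReal_measureReal, ofReal_measureReal]

lemma klDiv_withDensity_piecewise [IsFiniteMeasure ν] (hs : MeasurableSet s) {a b : ℝ}
    (ha : 0 ≤ a) (hb : 0 ≤ b) :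
    klDiv (ν.withDensity (s.piecewise (fun _ => ENNReal.ofReal a) fun _ => ENNReal.ofReal b)) ν
      = ∫⁻ x, s.piecewise (fun _ => ENNReal.ofReal (klFun a))
          (fun _ => ENNReal.ofReal (klFun b)) x ∂ν := by
  have hρ : Measurable (s.piecewise (fun _ => ENNReal.ofReal a) fun _ => ENNReal.ofReal b) :=
    measurable_const.piecewise hs measurable_const
  have : IsFiniteMeasure
      (ν.withDensity (s.piecewise (fun _ => ENNReal.ofReal a) fun _ => ENNReal.ofReal b)) :=
    isFiniteMeasure_withDensity (by simp [lintegral_piecewise_const hs, ENNReal.mul_eq_top])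
  rw [klDiv_eq_lintegral_klFun_of_ac (withDensity_absolutelyContinuous _ _)]
  refine lintegral_congr_ae ?_
  filter_upwards [Measure.rnDeriv_withDensity ν hρ] with x hx
  by_cases hxs : x ∈ s <;> simp [hx, hxs, ha, hb]

end Divergence

section Jplus

variable {X : Type*} [MeasurableSpace X] {F Ftil : Measure X} {A C : Set X} {ε : ℝ}

lemma ofReal_wf_le_rnDeriv (x : X) : ENNReal.ofReal (wf F Ftil A x) ≤ F.rnDeriv Ftil x := by
  by_cases hx : x ∈ A <;> simp [wf, hx, ENNReal.ofReal_toReal_le]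

lemma lintegral_ofReal_wf_withDensity_ne_top [IsFiniteMeasure F] {ρ : X → ℝ≥0∞}
    (hρ : Measurable ρ) {M : ℝ≥0∞} (hM : M ≠ ⊤) (hρM : ∀ x, ρ x ≤ M) :
    ∫⁻ x, ENNReal.ofReal (wf F Ftil A x) ∂(Ftil.withDensity ρ) ≠ ⊤ := by
  refine ne_top_of_le_ne_top (lt_top_iff_ne_top.1 ?_)
    (lintegral_withDensity_le_lintegral_mul Ftil hρ _)
  calc ∫⁻ x, (ρ * fun x => ENNReal.ofReal (wf F Ftil A x)) x ∂Ftil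
      ≤ ∫⁻ x, M * F.rnDeriv Ftil x ∂Ftil :=
        lintegral_mono fun x => mul_le_mul' (hρM x) (ofReal_wf_le_rnDeriv x)
    _ = M * ∫⁻ x, F.rnDeriv Ftil x ∂Ftil := lintegral_const_mul _ (Measure.measurable_rnDeriv _ _)
    _ < ⊤ := ENNReal.mul_lt_top hM.lt_top (Measure.lintegral_rnDeriv_lt_top F Ftil)

lemma Jplus_eq_top [IsProbabilityMeasure Ftil] (hC : MeasurableSet C)
    (h : 1 < (1 + ε) * Ftil.real C) : Jplus F Ftil A ε C = ⊤ := by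
  refine sInf_eq_top.2 ?_
  rintro _ ⟨G, ⟨hG, -, hKL⟩, hcons, -⟩
  have := mul_measureReal_le_of_le_rnDeriv (absolutelyContinuous_of_KL_ne_top hKL) hC hcons
  linarith [measureReal_le_one (μ := G) (s := C)]

lemma ofReal_binaryKL_le_Jplus [IsProbabilityMeasure Ftil] (hε : 0 < ε) (hC : MeasurableSet C)
    (h : (1 + ε) * Ftil.real C ≤ 1) :
    ENNReal.ofReal (binaryKL ((1 + ε) * Ftil.real C) (Ftil.real C)) ≤ Jplus F Ftil A ε C := by
  refine le_sInf ?_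
  rintro _ ⟨G, ⟨hG, -, hKL⟩, hcons, rfl⟩
  have hGac := absolutelyContinuous_of_KL_ne_top hKL
  rw [KL_eq_klDiv (by simp)]
  refine le_trans (ENNReal.ofReal_le_ofReal ?_) (ofReal_binaryKL_le_klDiv hC)
  have hlow := mul_measureReal_le_of_le_rnDeriv hGac hC hcons
  rcases (measureReal_nonneg (μ := Ftil) (s := C)).eq_or_lt with hq | hq
  · have hG0 : G.real C = 0 :=
      (measureReal_eq_zero_iff (measure_ne_top _ _)).2
        (hGac ((measureReal_eq_zero_iff (measure_ne_top _ _)).1 hq.symm))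
    rw [← hq, hG0, mul_zero]
  · have hq1 : Ftil.real C < 1 := by nlinarith
    exact monotoneOn_binaryKL_left hq hq1 ⟨by nlinarith, h⟩
      ⟨hlow.trans' (by nlinarith), measureReal_le_one⟩ hlow

lemma Jplus_le_ofReal_binaryKL [IsFiniteMeasure F] [IsProbabilityMeasure Ftil] (hε : 0 < ε)
    (hC : MeasurableSet C) (h : (1 + ε) * Ftil.real C ≤ 1) :
    Jplus F Ftil A ε C ≤ ENNReal.ofReal (binaryKL ((1 + ε) * Ftil.real C) (Ftil.real C)) := by
  have hq1 : 0 < 1 - Ftil.real C := by nlinarith [measureReal_nonneg (μ := Ftil) (s := C)]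
  set b := (1 - (1 + ε) * Ftil.real C) / (1 - Ftil.real C) with hb_def
  have hb : 0 ≤ b := div_nonneg (by linarith) hq1.le
  have hmass : (1 + ε) * Ftil.real C + b * (1 - Ftil.real C) = 1 := by
    rw [hb_def]
    field_simp
    ring
  set ρ := C.piecewise (fun _ => ENNReal.ofReal (1 + ε)) fun _ => ENNReal.ofReal b
  have hρ : Measurable ρ := measurable_const.piecewise hC measurable_const
  have hG : IsProbabilityMeasure (Ftil.withDensity ρ) := by
    constructor
    rw [withDensity_apply _ MeasurableSet.univ, Measure.restrict_univ,
      lintegral_piecewise_ofReal hC (by linarith) hb, hmass, ENNReal.ofReal_one]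
  have hKL : KL (Ftil.withDensity ρ) Ftil
      = ENNReal.ofReal (binaryKL ((1 + ε) * Ftil.real C) (Ftil.real C)) := by
    rw [KL_eq_klDiv (by simp), klDiv_withDensity_piecewise hC (by linarith) hb,
      lintegral_piecewise_ofReal hC (klFun_nonneg (by linarith)) (klFun_nonneg hb),
      binaryKL_mul_self_eq, ← hb_def]
    ring_nf
  refine sInf_le ⟨Ftil.withDensity ρ, ⟨hG, ?_, hKL ▸ ENNReal.ofReal_ne_top⟩, ?_, hKL.symm⟩
  · exact lintegral_ofReal_wf_withDensity_ne_top hρ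
      (M := ENNReal.ofReal (1 + ε) + ENNReal.ofReal b) (by finiteness)
      fun x => by by_cases hx : x ∈ C <;> simp [ρ, hx]
  · filter_upwards [Measure.rnDeriv_withDensity Ftil hρ] with x hx hxC
    simp [hx, ρ, hxC, ENNReal.toReal_ofReal (by linarith : 0 ≤ 1 + ε)]

lemma Jplus_mono_of_measure_le [IsFiniteMeasure F] [IsProbabilityMeasure Ftil] (hε : 0 < ε)
    {C' : Set X} (hC' : MeasurableSet C') (hC : MeasurableSet C) (h : Ftil C' ≤ Ftil C) :
    Jplus F Ftil A ε C' ≤ Jplus F Ftil A ε C := by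
  by_cases hCε : (1 + ε) * Ftil.real C ≤ 1
  swap
  · rw [Jplus_eq_top hC (not_le.1 hCε)]
    exact le_top
  have hq : Ftil.real C' ≤ Ftil.real C := ENNReal.toReal_mono (measure_ne_top _ _) h
  have hC'ε : (1 + ε) * Ftil.real C' ≤ 1 :=
    (mul_le_mul_of_nonneg_left hq (by linarith)).trans hCε
  have hmem : ∀ D, (1 + ε) * Ftil.real D ≤ 1 → Ftil.real D ∈ Icc 0 (1 + ε)⁻¹ := fun D hD =>
    ⟨measureReal_nonneg, by rwa [← one_div, le_div_iff₀' (by linarith)]⟩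
  calc Jplus F Ftil A ε C'
      ≤ ENNReal.ofReal (binaryKL ((1 + ε) * Ftil.real C') (Ftil.real C')) :=
        Jplus_le_ofReal_binaryKL hε hC' hC'ε
    _ ≤ ENNReal.ofReal (binaryKL ((1 + ε) * Ftil.real C) (Ftil.real C)) :=
        ENNReal.ofReal_le_ofReal <| monotoneOn_binaryKL_mul_self (by linarith)
          (hmem C' hC'ε) (hmem C hCε) hq
    _ ≤ Jplus F Ftil A ε C := ofReal_binaryKL_le_Jplus hε hC hCε

end Jplus

section NeymanPearson

variable {X : Type*} [MeasurableSpace X] {F Ftil : Measure X} {A : Set X}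

lemma measure_sdiff_le_measure_sdiff_iff {μ : Measure X} [IsFiniteMeasure μ] {s t : Set X}
    (hs : MeasurableSet s) (ht : MeasurableSet t) : μ (s \ t) ≤ μ (t \ s) ↔ μ s ≤ μ t := by
  rw [← measure_sdiff_add_inter s ht, ← measure_sdiff_add_inter t hs, inter_comm t,
    ENNReal.add_le_add_iff_right (measure_ne_top _ _)]

lemma measurableSet_Ct (hA : MeasurableSet A) (t : ℝ) : MeasurableSet (Ct F Ftil A t) :=
  hA.inter (measurableSet_le measurable_const (Measure.measurable_rnDeriv F Ftil))

lemma measure_eq_setLIntegral_rnDeriv_of_subset [SigmaFinite F] [SigmaFinite Ftil]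
    (hA : MeasurableSet A) (hac : F.restrict A ≪ Ftil) {S : Set X} (hS : MeasurableSet S)
    (hSA : S ⊆ A) : F S = ∫⁻ x in S, F.rnDeriv Ftil x ∂Ftil := by
  rw [← Measure.restrict_eq_self F hSA, ← Measure.setLIntegral_rnDeriv hac S]
  refine lintegral_congr_ae ?_
  filter_upwards [ae_restrict_of_ae (Measure.rnDeriv_restrict F Ftil hA), ae_restrict_mem hS]
    with x hx hxS
  rw [hx, indicator_of_mem (hSA hxS)]

lemma measure_Ct_le_of_measure_le [IsFiniteMeasure F] [IsFiniteMeasure Ftil]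
    (hA : MeasurableSet A) (hac : F.restrict A ≪ Ftil) {t : ℝ} (ht : 0 < t) {C : Set X}
    (hC : MeasurableSet C) (hCA : C ⊆ A) (h : F (Ct F Ftil A t) ≤ F C) :
    Ftil (Ct F Ftil A t) ≤ Ftil C := by
  set D := Ct F Ftil A t
  have hD : MeasurableSet D := measurableSet_Ct hA t
  have hDC : ENNReal.ofReal t * Ftil (D \ C) ≤ F (D \ C) := by
    rw [measure_eq_setLIntegral_rnDeriv_of_subset hA hac (hD.diff hC)
      (sdiff_subset.trans (sep_subset _ _)), ← setLIntegral_const]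
    exact setLIntegral_mono (Measure.measurable_rnDeriv _ _) fun x hx => hx.1.2
  have hCD : F (C \ D) ≤ ENNReal.ofReal t * Ftil (C \ D) := by
    rw [measure_eq_setLIntegral_rnDeriv_of_subset hA hac (hC.diff hD) (sdiff_subset.trans hCA),
      ← setLIntegral_const]
    exact setLIntegral_mono measurable_const fun x hx =>
      le_of_not_ge fun hle => hx.2 ⟨hCA hx.1, hle⟩
  have hF := (measure_sdiff_le_measure_sdiff_iff hD hC).2 h
  refine (measure_sdiff_le_measure_sdiff_iff hD hC).1 ?_
  exact (ENNReal.mul_le_mul_iff_right (by simpa using ht) ENNReal.ofReal_ne_top).1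
    (hDC.trans (hF.trans hCD))

end NeymanPearson

theorem stmt7_general {X : Type*} [MeasurableSpace X]
    (F Ftil : Measure X) [IsProbabilityMeasure F] [IsProbabilityMeasure Ftil]
    (A : Set X) (hA : MeasurableSet A) (hac : F.restrict A ≪ Ftil)
    (ε δ : ℝ) (hε : 0 < ε) :
    (⨆ t : {t : ℝ // 0 < t ∧ F (Ct F Ftil A t) ≤ ENNReal.ofReal δ},
        Jplus F Ftil A ε (Ct F Ftil A t.1))
      ≤ (⨅ C : {C : Set X // C ⊆ A ∧ MeasurableSet C ∧ ENNReal.ofReal δ ≤ F C},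
          Jplus F Ftil A ε C.1) ∧
    (⨅ C : {C : Set X // C ⊆ A ∧ MeasurableSet C ∧ ENNReal.ofReal δ ≤ F C},
        Jplus F Ftil A ε C.1)
      ≤ ⨅ t : {t : ℝ // 0 ≤ t ∧ ENNReal.ofReal δ ≤ F (Ct F Ftil A t)},
          Jplus F Ftil A ε (Ct F Ftil A t.1) := by
  refine ⟨iSup_le fun ⟨t, ht, hFt⟩ => le_iInf fun ⟨C, hCA, hC, hFC⟩ => ?_,
    le_iInf fun ⟨t, _, hFt⟩ => iInf_le_of_le
      ⟨Ct F Ftil A t, sep_subset _ _, measurableSet_Ct hA t, hFt⟩ le_rfl⟩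
  exact Jplus_mono_of_measure_le hε (measurableSet_Ct hA t) hC
    (measure_Ct_le_of_measure_le hA hac ht hC hCA (hFt.trans hFC))

theorem stmt7 {X : Type*} [MeasurableSpace X] [MetricSpace X] [CompleteSpace X]
    [TopologicalSpace.SeparableSpace X] [BorelSpace X]
    (F Ftil : Measure X) [IsProbabilityMeasure F] [IsProbabilityMeasure Ftil]
    (A : Set X) (hA : MeasurableSet A) (hac : F.restrict A ≪ Ftil)
    (ε δ : ℝ) (hε : 0 < ε) (hδ : 0 < δ) :
    (⨆ t : {t : ℝ // 0 < t ∧ F (Ct F Ftil A t) ≤ ENNReal.ofReal δ},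
        Jplus F Ftil A ε (Ct F Ftil A t.1))
      ≤ (⨅ C : {C : Set X // C ⊆ A ∧ MeasurableSet C ∧ ENNReal.ofReal δ ≤ F C},
          Jplus F Ftil A ε C.1) ∧
    (⨅ C : {C : Set X // C ⊆ A ∧ MeasurableSet C ∧ ENNReal.ofReal δ ≤ F C},
        Jplus F Ftil A ε C.1)
      ≤ ⨅ t : {t : ℝ // 0 ≤ t ∧ ENNReal.ofReal δ ≤ F (Ct F Ftil A t)},
          Jplus F Ftil A ε (Ct F Ftil A t.1) :=
  stmt7_general F Ftil A hA hac ε δ hε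
end
end

section
/- Let C ⊆ 𝒳 be measurable, ε ∈ (0,1), and F̃(C) < 1. Then inf{ H(G∣F̃) : G a probability measure on 𝒳 with dG/dF̃ ≤ 1−ε F̃-almost everywhere on C } = γ⁻_ε(F̃(C)). Moreover, the infimum is attained by the probability measure G_* whose density with respect to F̃ equals 1−ε on C and equals (1−(1−ε)F̃(C))/(1−F̃(C)) on the complement of C. -/
/-!
If `G ≪ F̃` and `f` is a probability density with respect to `F̃`, Gibbs' inequality
`H(G ∣ f F̃) ≥ 0` reads `H(G ∣ F̃) ≥ ∫ log f dG`. For `f` the density of `G_*` the right-hand side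
is `G(C) log(1 - ε) + (1 - G(C)) log b` with `b = (1 - (1 - ε) F̃(C)) / (1 - F̃(C)) ≥ 1`, which
decreases in `G(C)`. The constraint on `dG/dF̃` forces `G(C) ≤ (1 - ε) F̃(C)`, and at equality the
bound is `γ⁻_ε(F̃(C))`; `G_*` is admissible with `G_*(C) = (1 - ε) F̃(C)`, so it attains it.
-/

open MeasureTheory Filter Topology ENNReal
open scoped Classical

noncomputable section

/-- `γ⁻_ε(s)` -/
def gammaMinus (ε s : ℝ) : ℝ :=
  (1 - ε) * s * Real.log (1 - ε)
    + (1 - (1 - ε) * s) * Real.log ((1 - (1 - ε) * s) / (1 - s))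

open Set InformationTheory

section

variable {X : Type*} [MeasurableSpace X]

theorem integral_log_le_integral_llr {G μ : Measure X} [IsProbabilityMeasure G] [SigmaFinite μ]
    {f : X → ℝ≥0∞} (hf : Measurable f) (hf_ne_zero : ∀ x, f x ≠ 0) (hf_ne_top : ∀ x, f x ≠ ∞)
    (hf_le : ∫⁻ x, f x ∂μ ≤ 1) (hGμ : G ≪ μ) (h_int : Integrable (llr G μ) G)
    (h_log : Integrable (fun x ↦ Real.log (f x).toReal) G) :
    ∫ x, Real.log (f x).toReal ∂G ≤ ∫ x, llr G μ x ∂G := by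
  have hν_univ : μ.withDensity f univ ≤ 1 := by
    rwa [withDensity_apply _ MeasurableSet.univ, setLIntegral_univ]
  have : IsFiniteMeasure (μ.withDensity f) := ⟨hν_univ.trans_lt one_lt_top⟩
  have hGν : G ≪ μ.withDensity f :=
    hGμ.trans (withDensity_absolutelyContinuous' hf.aemeasurable (ae_of_all _ hf_ne_zero))
  have h_llr : llr G (μ.withDensity f) =ᵐ[G] fun x ↦ llr G μ x - Real.log (f x).toReal := by
    filter_upwards [hGμ.ae_le (Measure.rnDeriv_withDensity_right G μ hf.aemeasurable
        (ae_of_all _ hf_ne_zero) (ae_of_all _ hf_ne_top)), Measure.rnDeriv_pos hGμ,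
        hGμ.ae_le (Measure.rnDeriv_lt_top G μ)] with x hx hpos hlt
    simp only [llr_def]
    rw [hx, ENNReal.toReal_mul, ENNReal.toReal_inv,
      Real.log_mul (inv_ne_zero (ENNReal.toReal_ne_zero.2 ⟨hf_ne_zero x, hf_ne_top x⟩))
        (ENNReal.toReal_ne_zero.2 ⟨hpos.ne', hlt.ne⟩), Real.log_inv]
    ring
  have h_gibbs :=
    integral_llr_add_sub_measure_univ_nonneg hGν ((h_int.sub h_log).congr h_llr.symm)
  rw [integral_congr_ae h_llr, integral_sub h_int h_log, probReal_univ (μ := G)] at h_gibbs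
  have : (μ.withDensity f).real univ ≤ 1 :=
    ENNReal.toReal_le_of_le_ofReal zero_le_one (by simpa using hν_univ)
  linarith

theorem KL_withDensity {μ : Measure X} [SigmaFinite μ] {f : X → ℝ≥0∞} (hf : Measurable f)
    (h_log : Integrable (fun x ↦ Real.log (f x).toReal) (μ.withDensity f)) :
    KL (μ.withDensity f) μ = ENNReal.ofReal (∫ x, Real.log (f x).toReal ∂μ.withDensity f) := by
  have h_rn : (μ.withDensity f).rnDeriv μ =ᵐ[μ.withDensity f] f :=
    withDensity_absolutelyContinuous μ f |>.ae_le (Measure.rnDeriv_withDensity μ hf)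
  have h_llr : (fun x ↦ Real.log ((μ.withDensity f).rnDeriv μ x).toReal)
      =ᵐ[μ.withDensity f] fun x ↦ Real.log (f x).toReal := by
    filter_upwards [h_rn] with x hx
    rw [hx]
  rw [KL, if_pos ⟨withDensity_absolutelyContinuous μ f, h_log.congr h_llr.symm⟩,
    integral_congr_ae h_llr]

theorem measureReal_le_mul_of_rnDeriv_le {G μ : Measure X} [IsFiniteMeasure G]
    [IsFiniteMeasure μ] (hGμ : G ≪ μ) (C : Set X) {a : ℝ} (ha : 0 ≤ a)
    (h : ∀ᵐ x ∂μ, x ∈ C → (G.rnDeriv μ x).toReal ≤ a) : G.real C ≤ a * μ.real C := by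
  have h_le : G C ≤ ENNReal.ofReal a * μ C := by
    rw [← Measure.setLIntegral_rnDeriv hGμ C, ← setLIntegral_const]
    refine setLIntegral_mono_ae measurable_const.aemeasurable ?_
    filter_upwards [h, Measure.rnDeriv_lt_top G μ] with x hx hlt hxC
    exact (ENNReal.le_ofReal_iff_toReal_le hlt.ne ha).2 (hx hxC)
  calc G.real C ≤ (ENNReal.ofReal a * μ C).toReal :=
        ENNReal.toReal_mono (ENNReal.mul_ne_top ofReal_ne_top (measure_ne_top μ C)) h_le
    _ = a * μ.real C := by rw [ENNReal.toReal_mul, ENNReal.toReal_ofReal ha, measureReal_def]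

theorem integral_ite_mem (G : Measure X) [IsProbabilityMeasure G] {C : Set X}
    (hC : MeasurableSet C) (p q : ℝ) :
    ∫ x, (if x ∈ C then p else q) ∂G = G.real C * p + (1 - G.real C) * q := by
  rw [← probReal_compl_eq_one_sub hC]
  exact (integral_piecewise hC (integrableOn_const ..) (integrableOn_const ..)).trans
    (by simp only [setIntegral_const, smul_eq_mul])

theorem integrable_ite_mem (G : Measure X) [IsFiniteMeasure G] {C : Set X}
    (hC : MeasurableSet C) (p q : ℝ) : Integrable (fun x ↦ if x ∈ C then p else q) G :=
  Integrable.piecewise hC (integrableOn_const ..) (integrableOn_const ..)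

end

theorem gammaMinus_le {ε s t : ℝ} (hε0 : 0 ≤ ε) (hε1 : ε < 1) (hs0 : 0 ≤ s) (hs1 : s < 1)
    (ht : t ≤ (1 - ε) * s) :
    gammaMinus ε s ≤ t * Real.log (1 - ε) + (1 - t) * Real.log ((1 - (1 - ε) * s) / (1 - s)) := by
  have h_log_a : Real.log (1 - ε) ≤ 0 := Real.log_nonpos (by linarith) (by linarith)
  have h_log_b : 0 ≤ Real.log ((1 - (1 - ε) * s) / (1 - s)) :=
    Real.log_nonneg ((one_le_div (by linarith)).2 (by nlinarith))
  unfold gammaMinus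
  nlinarith [mul_nonneg (sub_nonneg.2 ht) (sub_nonneg.2 (h_log_a.trans h_log_b))]

section OptimalDensity

variable {X : Type*} {C : Set X} {ε s : ℝ}

def optimalDensity (C : Set X) (ε s : ℝ) (x : X) : ℝ≥0∞ :=
  ENNReal.ofReal (if x ∈ C then 1 - ε else (1 - (1 - ε) * s) / (1 - s))

theorem ite_optimalDensity_pos (hε0 : 0 ≤ ε) (hε1 : ε < 1) (hs0 : 0 ≤ s) (hs1 : s < 1) (x : X) :
    0 < if x ∈ C then 1 - ε else (1 - (1 - ε) * s) / (1 - s) := by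
  split_ifs
  · linarith
  · exact div_pos (by nlinarith) (by linarith)

theorem toReal_optimalDensity (hε0 : 0 ≤ ε) (hε1 : ε < 1) (hs0 : 0 ≤ s) (hs1 : s < 1) (x : X) :
    (optimalDensity C ε s x).toReal
      = if x ∈ C then 1 - ε else (1 - (1 - ε) * s) / (1 - s) :=
  ENNReal.toReal_ofReal (ite_optimalDensity_pos hε0 hε1 hs0 hs1 x).le

theorem optimalDensity_ne_zero (hε0 : 0 ≤ ε) (hε1 : ε < 1) (hs0 : 0 ≤ s) (hs1 : s < 1) (x : X) :
    optimalDensity C ε s x ≠ 0 :=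
  ENNReal.ofReal_ne_zero_iff.2 (ite_optimalDensity_pos hε0 hε1 hs0 hs1 x)

variable [MeasurableSpace X]

theorem measurable_optimalDensity (hC : MeasurableSet C) : Measurable (optimalDensity C ε s) :=
  ENNReal.measurable_ofReal.comp (Measurable.ite hC measurable_const measurable_const)

theorem integral_log_optimalDensity (G : Measure X) [IsProbabilityMeasure G]
    (hC : MeasurableSet C) (hε0 : 0 ≤ ε) (hε1 : ε < 1) (hs0 : 0 ≤ s) (hs1 : s < 1) :
    ∫ x, Real.log (optimalDensity C ε s x).toReal ∂G
      = G.real C * Real.log (1 - ε)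
        + (1 - G.real C) * Real.log ((1 - (1 - ε) * s) / (1 - s)) := by
  simp only [toReal_optimalDensity hε0 hε1 hs0 hs1, apply_ite Real.log]
  exact integral_ite_mem G hC _ _

theorem integrable_log_optimalDensity (G : Measure X) [IsFiniteMeasure G]
    (hC : MeasurableSet C) (hε0 : 0 ≤ ε) (hε1 : ε < 1) (hs0 : 0 ≤ s) (hs1 : s < 1) :
    Integrable (fun x ↦ Real.log (optimalDensity C ε s x).toReal) G := by
  simp only [toReal_optimalDensity hε0 hε1 hs0 hs1, apply_ite Real.log]
  exact integrable_ite_mem G hC _ _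

variable {μ : Measure X}

theorem rnDeriv_withDensity_optimalDensity_le [SigmaFinite μ] (hC : MeasurableSet C)
    (hε1 : ε < 1) :
    ∀ᵐ x ∂μ, x ∈ C → ((μ.withDensity (optimalDensity C ε s)).rnDeriv μ x).toReal ≤ 1 - ε := by
  filter_upwards [Measure.rnDeriv_withDensity μ (measurable_optimalDensity hC)] with x hx hxC
  rw [hx, optimalDensity, if_pos hxC, ENNReal.toReal_ofReal (by linarith)]

theorem measureReal_withDensity_optimalDensity (hC : MeasurableSet C) (hε1 : ε < 1) :
    (μ.withDensity (optimalDensity C ε s)).real C = (1 - ε) * μ.real C := by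
  rw [measureReal_def, withDensity_apply _ hC,
    setLIntegral_congr_fun hC (fun x hx ↦ by rw [optimalDensity, if_pos hx]), setLIntegral_const,
    ENNReal.toReal_mul, ENNReal.toReal_ofReal (by linarith), measureReal_def]

variable [IsProbabilityMeasure μ]

theorem lintegral_optimalDensity (hC : MeasurableSet C) (hε0 : 0 ≤ ε) (hε1 : ε < 1)
    (hs : μ.real C < 1) : ∫⁻ x, optimalDensity C ε (μ.real C) x ∂μ = 1 := by
  have hs0 : 0 ≤ μ.real C := measureReal_nonneg
  unfold optimalDensity
  rw [← ofReal_integral_eq_lintegral_ofReal (integrable_ite_mem μ hC _ _), integral_ite_mem μ hC,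
    ENNReal.ofReal_eq_one]
  · have : 1 - μ.real C ≠ 0 := (sub_pos.2 hs).ne'
    field_simp
    ring
  · exact ae_of_all _ fun x ↦ (ite_optimalDensity_pos hε0 hε1 hs0 hs x).le

theorem isProbabilityMeasure_withDensity_optimalDensity (hC : MeasurableSet C) (hε0 : 0 ≤ ε)
    (hε1 : ε < 1) (hs : μ.real C < 1) :
    IsProbabilityMeasure (μ.withDensity (optimalDensity C ε (μ.real C))) :=
  ⟨by rw [withDensity_apply _ MeasurableSet.univ, setLIntegral_univ,
    lintegral_optimalDensity hC hε0 hε1 hs]⟩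

theorem KL_withDensity_optimalDensity (hC : MeasurableSet C) (hε0 : 0 ≤ ε) (hε1 : ε < 1)
    (hs : μ.real C < 1) :
    KL (μ.withDensity (optimalDensity C ε (μ.real C))) μ
      = ENNReal.ofReal (gammaMinus ε (μ.real C)) := by
  have hs0 : 0 ≤ μ.real C := measureReal_nonneg
  have := isProbabilityMeasure_withDensity_optimalDensity hC hε0 hε1 hs
  rw [KL_withDensity (measurable_optimalDensity hC)
      (integrable_log_optimalDensity _ hC hε0 hε1 hs0 hs),
    integral_log_optimalDensity _ hC hε0 hε1 hs0 hs,
    measureReal_withDensity_optimalDensity hC hε1, gammaMinus]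

theorem ofReal_gammaMinus_le_KL {G : Measure X} [IsProbabilityMeasure G] (hC : MeasurableSet C)
    (hε0 : 0 ≤ ε) (hε1 : ε < 1) (hs : μ.real C < 1)
    (hG : ∀ᵐ x ∂μ, x ∈ C → (G.rnDeriv μ x).toReal ≤ 1 - ε) :
    ENNReal.ofReal (gammaMinus ε (μ.real C)) ≤ KL G μ := by
  have hs0 : 0 ≤ μ.real C := measureReal_nonneg
  rw [KL]
  split_ifs with h
  · obtain ⟨hGμ, h_int⟩ := h
    refine ENNReal.ofReal_le_ofReal ?_
    calc gammaMinus ε (μ.real C)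
        ≤ G.real C * Real.log (1 - ε)
          + (1 - G.real C) * Real.log ((1 - (1 - ε) * μ.real C) / (1 - μ.real C)) :=
          gammaMinus_le hε0 hε1 hs0 hs (measureReal_le_mul_of_rnDeriv_le hGμ C (by linarith) hG)
      _ = ∫ x, Real.log (optimalDensity C ε (μ.real C) x).toReal ∂G :=
          (integral_log_optimalDensity G hC hε0 hε1 hs0 hs).symm
      _ ≤ ∫ x, llr G μ x ∂G :=
          integral_log_le_integral_llr (measurable_optimalDensity hC)
            (optimalDensity_ne_zero hε0 hε1 hs0 hs) (fun _ ↦ ENNReal.ofReal_ne_top)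
            (lintegral_optimalDensity hC hε0 hε1 hs).le hGμ h_int
            (integrable_log_optimalDensity G hC hε0 hε1 hs0 hs)
  · exact le_top

end OptimalDensity

theorem stmt9_general {X : Type*} [MeasurableSpace X]
    (Ftil : Measure X) [IsProbabilityMeasure Ftil]
    (C : Set X) (hC : MeasurableSet C) (ε : ℝ) (hε : ε ∈ Set.Ioo (0 : ℝ) 1)
    (hlt : Ftil C < 1) :
    sInf { r : ℝ≥0∞ | ∃ G : Measure X, IsProbabilityMeasure G ∧
        (∀ᵐ x ∂Ftil, x ∈ C → ((G.rnDeriv Ftil) x).toReal ≤ 1 - ε) ∧ r = KL G Ftil }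
      = ENNReal.ofReal (gammaMinus ε (Ftil C).toReal) ∧
    ∃ Gstar : Measure X,
      Gstar = Ftil.withDensity (fun x => ENNReal.ofReal
        (if x ∈ C then 1 - ε
         else (1 - (1 - ε) * (Ftil C).toReal) / (1 - (Ftil C).toReal))) ∧
      IsProbabilityMeasure Gstar ∧
      (∀ᵐ x ∂Ftil, x ∈ C → ((Gstar.rnDeriv Ftil) x).toReal ≤ 1 - ε) ∧
      KL Gstar Ftil = ENNReal.ofReal (gammaMinus ε (Ftil C).toReal) := by
  obtain ⟨hε0, hε1⟩ := hε
  have hs : Ftil.real C < 1 := ENNReal.toReal_lt_of_lt_ofReal (by simpa using hlt)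
  have hGstar := isProbabilityMeasure_withDensity_optimalDensity hC hε0.le hε1 hs
  have hGstar_le := rnDeriv_withDensity_optimalDensity_le (μ := Ftil) (s := Ftil.real C) hC hε1
  have hKL := KL_withDensity_optimalDensity hC hε0.le hε1 hs
  refine ⟨le_antisymm (sInf_le ⟨_, hGstar, hGstar_le, hKL.symm⟩) (le_sInf ?_),
    _, rfl, hGstar, hGstar_le, hKL⟩
  rintro _ ⟨G, hG, hGC, rfl⟩
  exact ofReal_gammaMinus_le_KL hC hε0.le hε1 hs hGC

theorem stmt9 {X : Type*} [MeasurableSpace X] [MetricSpace X] [CompleteSpace X]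
    [TopologicalSpace.SeparableSpace X] [BorelSpace X]
    (Ftil : Measure X) [IsProbabilityMeasure Ftil]
    (C : Set X) (hC : MeasurableSet C) (ε : ℝ) (hε : ε ∈ Set.Ioo (0 : ℝ) 1)
    (hlt : Ftil C < 1) :
    sInf { r : ℝ≥0∞ | ∃ G : Measure X, IsProbabilityMeasure G ∧
        (∀ᵐ x ∂Ftil, x ∈ C → ((G.rnDeriv Ftil) x).toReal ≤ 1 - ε) ∧ r = KL G Ftil }
      = ENNReal.ofReal (gammaMinus ε (Ftil C).toReal) ∧
    ∃ Gstar : Measure X,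
      Gstar = Ftil.withDensity (fun x => ENNReal.ofReal
        (if x ∈ C then 1 - ε
         else (1 - (1 - ε) * (Ftil C).toReal) / (1 - (Ftil C).toReal))) ∧
      IsProbabilityMeasure Gstar ∧
      (∀ᵐ x ∂Ftil, x ∈ C → ((Gstar.rnDeriv Ftil) x).toReal ≤ 1 - ε) ∧
      KL Gstar Ftil = ENNReal.ofReal (gammaMinus ε (Ftil C).toReal) :=
  stmt9_general Ftil C hC ε hε hlt
end
end

section
/- Let α ∈ (0,1), q ≥ a, and set k(x) = 1_{(q,∞)}(x)·w(x) and M(λ) = ∫ e^{λ k(x)} dF̃(x). Suppose λ ≥ 0 satisfies M(λ) < ∞, ∫ k e^{λk} dF̃ < ∞, and ∫ k e^{λk} dF̃ / M(λ) = α. Then inf{ H(G∣F̃) : G a probability measure on ℝ with ∫ k dG ≥ α } = λα − log M(λ), and the infimum is attained by the probability measure G*_α with density dG*_α/dF̃ = e^{λ k}/M(λ). -/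
open MeasureTheory Filter Topology ENNReal
open scoped Classical

noncomputable section

/-!
The lower bound is the Donsker–Varadhan inequality: for `G ≪ F̃` and integrable `f`,
`H(G ∣ F̃) - (∫ f dG - log ∫ e^f dF̃) = H(G ∣ F̃_f) ≥ 0`, where `F̃_f` is `F̃` tilted by `e^f`.
Applied to the truncations `min(λk, n)` and passed to the limit by monotone convergence, it gives
`λ ∫ k dG ≤ H(G ∣ F̃) + log M(λ)` even when `∫ k dG = ∞`. The minimiser `G*_α` is `F̃` tilted by
`λk`: its log-density is `λk - log M(λ)` and its mean of `k` is `α`, so equality holds.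
-/

open Real

section Gibbs

variable {X : Type*} [MeasurableSpace X] {G μ : Measure X} {f : X → ℝ}

lemma KL_of_ac_of_integrable (hGμ : G ≪ μ) (hllr : Integrable (llr G μ) G) :
    KL G μ = ENNReal.ofReal (∫ x, llr G μ x ∂G) :=
  if_pos ⟨hGμ, hllr⟩

lemma KL_eq_top_of_not_ac_and_integrable (h : ¬ (G ≪ μ ∧ Integrable (llr G μ) G)) : KL G μ = ⊤ :=
  if_neg h

lemma KL_tilted_self [IsProbabilityMeasure μ] (hexp : Integrable (fun x => exp (f x)) μ)
    (hf : Integrable f (μ.tilted f)) :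
    KL (μ.tilted f) μ = ENNReal.ofReal (∫ x, f x ∂(μ.tilted f) - log (∫ x, exp (f x) ∂μ)) := by
  have := isProbabilityMeasure_tilted hexp
  have hllr : llr (μ.tilted f) μ =ᵐ[μ.tilted f] fun x => f x - log (∫ x, exp (f x) ∂μ) :=
    (tilted_absolutelyContinuous μ f).ae_le (log_rnDeriv_tilted_left_self hexp)
  rw [KL_of_ac_of_integrable (tilted_absolutelyContinuous μ f)
      ((hf.sub (integrable_const _)).congr hllr.symm),
    integral_congr_ae hllr, integral_sub hf (integrable_const _), integral_const,
    probReal_univ, one_smul]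

lemma integral_sub_log_integral_exp_le_integral_llr [IsProbabilityMeasure G]
    [IsProbabilityMeasure μ] (hGμ : G ≪ μ) (hllr : Integrable (llr G μ) G) (hf : Integrable f G)
    (hexp : Integrable (fun x => exp (f x)) μ) :
    ∫ x, f x ∂G - log (∫ x, exp (f x) ∂μ) ≤ ∫ x, llr G μ x ∂G := by
  have := isProbabilityMeasure_tilted hexp
  have hGibbs := InformationTheory.integral_llr_add_sub_measure_univ_nonneg
    (hGμ.trans (absolutelyContinuous_tilted hexp)) (integrable_llr_tilted_right hGμ hf hllr hexp)
  rw [integral_llr_tilted_right hGμ hf hexp hllr] at hGibbs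
  simp only [probReal_univ, add_sub_cancel_right] at hGibbs
  linarith

lemma lintegral_ofReal_le_integral_llr_add_log [IsProbabilityMeasure G] [IsProbabilityMeasure μ]
    (hGμ : G ≪ μ) (hllr : Integrable (llr G μ) G) (hfm : Measurable f) (hf0 : 0 ≤ f)
    (hexp : Integrable (fun x => exp (f x)) μ) :
    ∫⁻ x, ENNReal.ofReal (f x) ∂G
      ≤ ENNReal.ofReal (∫ x, llr G μ x ∂G + log (∫ x, exp (f x) ∂μ)) := by
  set g : ℕ → X → ℝ := fun n x => min (f x) n
  have hgm (n : ℕ) : Measurable (g n) := hfm.min measurable_const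
  have hg0 (n : ℕ) (x : X) : 0 ≤ g n x := le_min (hf0 x) n.cast_nonneg
  have hf_eq_iSup (x : X) : ENNReal.ofReal (f x) = ⨆ n, ENNReal.ofReal (g n x) :=
    le_antisymm (le_iSup_of_le ⌈f x⌉₊ (by simp only [g, min_eq_left (Nat.le_ceil _), le_refl]))
      (iSup_le fun n => ENNReal.ofReal_le_ofReal (min_le_left _ _))
  have hg_mono : Monotone fun n x => ENNReal.ofReal (g n x) := fun m n hmn x =>
    ENNReal.ofReal_le_ofReal (min_le_min_left _ (Nat.cast_le.2 hmn))
  simp_rw [hf_eq_iSup]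
  rw [lintegral_iSup (fun n => (hgm n).ennreal_ofReal) hg_mono]
  refine iSup_le fun n => ?_
  have hgint : Integrable (g n) G :=
    Integrable.of_bound (hgm n).aestronglyMeasurable n
      (ae_of_all _ fun x => by rw [norm_of_nonneg (hg0 n x)]; exact min_le_right _ _)
  have hgexp : Integrable (fun x => exp (g n x)) μ :=
    hexp.mono' (hgm n).exp.aestronglyMeasurable
      (ae_of_all _ fun x => by
        rw [norm_of_nonneg (exp_nonneg _)]
        exact exp_le_exp.2 (min_le_left _ _))
  have hlog : log (∫ x, exp (g n x) ∂μ) ≤ log (∫ x, exp (f x) ∂μ) :=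
    log_le_log (integral_exp_pos hgexp)
      (integral_mono hgexp hexp fun x => exp_le_exp.2 (min_le_left _ _))
  rw [← ofReal_integral_eq_lintegral_ofReal hgint (ae_of_all _ (hg0 n))]
  refine ENNReal.ofReal_le_ofReal ?_
  linarith [integral_sub_log_integral_exp_le_integral_llr hGμ hllr hgint hgexp]

lemma ofReal_sub_log_integral_exp_le_KL [IsProbabilityMeasure G] [IsProbabilityMeasure μ]
    (hfm : Measurable f) (hf0 : 0 ≤ f) (hexp : Integrable (fun x => exp (f x)) μ) {c : ℝ}
    (hc : ENNReal.ofReal c ≤ ∫⁻ x, ENNReal.ofReal (f x) ∂G) :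
    ENNReal.ofReal (c - log (∫ x, exp (f x) ∂μ)) ≤ KL G μ := by
  by_cases h : G ≪ μ ∧ Integrable (llr G μ) G
  swap
  · rw [KL_eq_top_of_not_ac_and_integrable h]
    exact le_top
  obtain ⟨hGμ, hllr⟩ := h
  rw [KL_of_ac_of_integrable hGμ hllr]
  have hlog_nonneg : 0 ≤ log (∫ x, exp (f x) ∂μ) := by
    refine log_nonneg ?_
    calc (1 : ℝ) = ∫ _x, (1 : ℝ) ∂μ := by simp
      _ ≤ ∫ x, exp (f x) ∂μ :=
        integral_mono (integrable_const 1) hexp fun x => one_le_exp (hf0 x)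
  rcases (ENNReal.ofReal_le_ofReal_iff'.1
      (hc.trans (lintegral_ofReal_le_integral_llr_add_log hGμ hllr hfm hf0 hexp))) with h | h
  · exact ENNReal.ofReal_le_ofReal (by linarith)
  · rw [ENNReal.ofReal_of_nonpos (by linarith)]
    exact zero_le

end Gibbs

theorem stmt11_general (F Ftil : Measure ℝ) [IsProbabilityMeasure Ftil]
    (a : ℝ)
    -- the weight function `w = (dF/dF̃)·1_{(a,∞)}`
    (w : ℝ → ℝ) (hw : w = Set.indicator (Set.Ioi a) fun y => ((F.rnDeriv Ftil) y).toReal)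
    (α : ℝ) (q : ℝ)
    -- `k = 1_{(q,∞)}·w`
    (k : ℝ → ℝ) (hk : k = Set.indicator (Set.Ioi q) fun y => w y)
    (lam : ℝ) (hlam : 0 ≤ lam)
    (hM : Integrable (fun x => Real.exp (lam * k x)) Ftil)
    (hM' : Integrable (fun x => k x * Real.exp (lam * k x)) Ftil)
    (heq : (∫ x, k x * Real.exp (lam * k x) ∂Ftil) / (∫ x, Real.exp (lam * k x) ∂Ftil) = α) :
    sInf { r : ℝ≥0∞ | ∃ G : Measure ℝ, IsProbabilityMeasure G ∧
        ENNReal.ofReal α ≤ ∫⁻ x, ENNReal.ofReal (k x) ∂G ∧ r = KL G Ftil }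
      = ENNReal.ofReal (lam * α - Real.log (∫ x, Real.exp (lam * k x) ∂Ftil)) ∧
    ∃ Gstar : Measure ℝ,
      Gstar = Ftil.withDensity (fun x => ENNReal.ofReal
        (Real.exp (lam * k x) / ∫ y, Real.exp (lam * k y) ∂Ftil)) ∧
      IsProbabilityMeasure Gstar ∧
      ENNReal.ofReal α ≤ (∫⁻ x, ENNReal.ofReal (k x) ∂Gstar) ∧
      KL Gstar Ftil
        = ENNReal.ofReal (lam * α - Real.log (∫ x, Real.exp (lam * k x) ∂Ftil)) := by
  have hk0 : 0 ≤ k := by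
    rw [hk, hw]
    exact Set.indicator_nonneg fun _ _ => Set.indicator_nonneg (fun _ _ => toReal_nonneg) _
  have hkm : Measurable k := by
    rw [hk, hw]
    exact ((F.measurable_rnDeriv Ftil).ennreal_toReal.indicator measurableSet_Ioi).indicator
      measurableSet_Ioi
  -- `Measure.tilted` unfolds to exactly the density `e^{λk}/M(λ)` of the statement.
  set Gstar := Ftil.tilted fun x => lam * k x
  have hkint : Integrable k Gstar :=
    (integrable_tilted_iff hM k).2 (hM'.congr (ae_of_all _ fun x => mul_comm _ _))
  have hkGstar : ∫ x, k x ∂Gstar = α := by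
    simp_rw [Gstar, integral_tilted, smul_eq_mul, div_mul_eq_mul_div, integral_div,
      mul_comm (rexp _) (k _), heq]
  have hlintGstar : ∫⁻ x, ENNReal.ofReal (k x) ∂Gstar = ENNReal.ofReal α := by
    rw [← ofReal_integral_eq_lintegral_ofReal hkint (ae_of_all _ hk0), hkGstar]
  have hKL : KL Gstar Ftil
      = ENNReal.ofReal (lam * α - Real.log (∫ x, Real.exp (lam * k x) ∂Ftil)) := by
    rw [KL_tilted_self hM (hkint.const_mul lam), integral_const_mul, hkGstar]
  refine ⟨le_antisymm (sInf_le ⟨Gstar, isProbabilityMeasure_tilted hM, hlintGstar.ge, hKL.symm⟩)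
    (le_sInf ?_), Gstar, rfl, isProbabilityMeasure_tilted hM, hlintGstar.ge, hKL⟩
  rintro _ ⟨G, hG, hGk, rfl⟩
  refine ofReal_sub_log_integral_exp_le_KL (hkm.const_mul lam)
    (fun x => mul_nonneg hlam (hk0 x)) hM ?_
  calc ENNReal.ofReal (lam * α) = ENNReal.ofReal lam * ENNReal.ofReal α := ENNReal.ofReal_mul hlam
    _ ≤ ENNReal.ofReal lam * ∫⁻ x, ENNReal.ofReal (k x) ∂G := by gcongr
    _ = ∫⁻ x, ENNReal.ofReal (lam * k x) ∂G := by
      simp_rw [ENNReal.ofReal_mul hlam]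
      exact (lintegral_const_mul _ hkm.ennreal_ofReal).symm

theorem stmt11 (F Ftil : Measure ℝ) [IsProbabilityMeasure F] [IsProbabilityMeasure Ftil]
    (a : ℝ) (hac : F.restrict (Set.Ioi a) ≪ Ftil)
    -- the weight function `w = (dF/dF̃)·1_{(a,∞)}`
    (w : ℝ → ℝ) (hw : w = Set.indicator (Set.Ioi a) fun y => ((F.rnDeriv Ftil) y).toReal)
    (α : ℝ) (hα : α ∈ Set.Ioo (0 : ℝ) 1) (q : ℝ) (hq : a ≤ q)
    -- `k = 1_{(q,∞)}·w`
    (k : ℝ → ℝ) (hk : k = Set.indicator (Set.Ioi q) fun y => w y)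
    (lam : ℝ) (hlam : 0 ≤ lam)
    (hM : Integrable (fun x => Real.exp (lam * k x)) Ftil)
    (hM' : Integrable (fun x => k x * Real.exp (lam * k x)) Ftil)
    (heq : (∫ x, k x * Real.exp (lam * k x) ∂Ftil) / (∫ x, Real.exp (lam * k x) ∂Ftil) = α) :
    sInf { r : ℝ≥0∞ | ∃ G : Measure ℝ, IsProbabilityMeasure G ∧
        ENNReal.ofReal α ≤ ∫⁻ x, ENNReal.ofReal (k x) ∂G ∧ r = KL G Ftil }
      = ENNReal.ofReal (lam * α - Real.log (∫ x, Real.exp (lam * k x) ∂Ftil)) ∧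
    ∃ Gstar : Measure ℝ,
      Gstar = Ftil.withDensity (fun x => ENNReal.ofReal
        (Real.exp (lam * k x) / ∫ y, Real.exp (lam * k y) ∂Ftil)) ∧
      IsProbabilityMeasure Gstar ∧
      ENNReal.ofReal α ≤ (∫⁻ x, ENNReal.ofReal (k x) ∂Gstar) ∧
      KL Gstar Ftil
        = ENNReal.ofReal (lam * α - Real.log (∫ x, Real.exp (lam * k x) ∂Ftil)) :=
  stmt11_general F Ftil a w hw α q k hk lam hlam hM hM' heq
end
end

section
/- Let μ be a probability measure on a measurable space 𝒳 and ψ: 𝒳 → [0,∞) measurable with ∫ e^{σψ} dμ < ∞ for every σ > 0. Then for every K < ∞, lim_{m→∞} sup{ ∫ (ψ − min(ψ, m)) dG : G a probability measure on 𝒳 with H(G∣μ) ≤ K } = 0; that is, the family of measures { G : H(G∣μ) ≤ K } is uniformly integrable with respect to ψ. -/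
open MeasureTheory Filter Topology ENNReal
open scoped Classical

noncomputable section

/-!
By the Donsker–Varadhan inequality, `∫ g dG ≤ H(G∣μ) + log ∫ e^g dμ`, applied to
`g = σ (ψ - min(ψ, m))`, every `G` with `H(G∣μ) ≤ K` satisfies
`∫ (ψ - min(ψ, m)) dG ≤ (K + log ∫ e^{σ (ψ - min(ψ, m))} dμ) / σ`.
By dominated convergence (dominated by `e^{σψ}`) the integral inside the logarithm tends to `1`
as `m → ∞`, so the supremum is eventually at most `(K + 1) / σ`, which is small for large `σ`.
-/

open InformationTheory

section
variable {X : Type*} [MeasurableSpace X] {μ G : Measure X}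

lemma KL_eq_klDiv_s17 [IsProbabilityMeasure G] [IsProbabilityMeasure μ] : KL G μ = klDiv G μ := by
  simp [KL, klDiv_def, llr_def]

lemma norm_exp_mul_le_exp_mul {a b σ : ℝ} (hσ : 0 ≤ σ) (hab : a ≤ b) :
    ‖Real.exp (σ * a)‖ ≤ Real.exp (σ * b) := by
  rw [Real.norm_of_nonneg (Real.exp_nonneg _)]
  exact Real.exp_le_exp.2 (mul_le_mul_of_nonneg_left hab hσ)

lemma integrable_exp_mul_of_le {f g : X → ℝ} {σ : ℝ} (hσ : 0 ≤ σ)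
    (hg : Integrable (fun x => Real.exp (σ * g x)) μ) (hf : Measurable f) (hfg : ∀ x, f x ≤ g x) :
    Integrable (fun x => Real.exp (σ * f x)) μ :=
  hg.mono' (hf.const_mul σ).exp.aestronglyMeasurable <|
    ae_of_all _ fun x => norm_exp_mul_le_exp_mul hσ (hfg x)

lemma integrable_exp_mul_sub_min_natCast {ψ : X → ℝ} (hψ : Measurable ψ) (hψ0 : 0 ≤ ψ) {σ : ℝ}
    (hσ : 0 ≤ σ) (hint : Integrable (fun x => Real.exp (σ * ψ x)) μ) (m : ℕ) :
    Integrable (fun x => Real.exp (σ * (ψ x - min (ψ x) m))) μ :=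
  integrable_exp_mul_of_le hσ hint (hψ.sub (hψ.min measurable_const)) fun x =>
    sub_le_self _ (le_min (hψ0 x) m.cast_nonneg)

lemma lintegral_ofReal_eq_iSup_min {g : X → ℝ} (hg : Measurable g) :
    ∫⁻ x, ENNReal.ofReal (g x) ∂μ = ⨆ n : ℕ, ∫⁻ x, ENNReal.ofReal (min (g x) n) ∂μ := by
  simp_rw [ENNReal.ofReal_min, ENNReal.ofReal_natCast]
  rw [← lintegral_iSup (fun n => hg.ennreal_ofReal.min measurable_const)
    fun m n hmn x => min_le_min_left _ (Nat.cast_le.2 hmn)]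
  simp_rw [← inf_iSup_eq, ENNReal.iSup_natCast, inf_top_eq]

lemma integral_le_toReal_klDiv_add_log_integral_exp [IsProbabilityMeasure G] [IsProbabilityMeasure μ]
    (hKL : klDiv G μ ≠ ∞) {g : X → ℝ} (hgG : Integrable g G)
    (hgμ : Integrable (fun x => Real.exp (g x)) μ) :
    ∫ x, g x ∂G ≤ (klDiv G μ).toReal + Real.log (∫ x, Real.exp (g x) ∂μ) := by
  obtain ⟨hac, hllr⟩ := klDiv_ne_top_iff.1 hKL
  -- Gibbs' inequality for `G` against `μ.tilted g`, whose log-likelihood ratio is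
  -- `llr G μ - g + log ∫ e^g dμ`
  have := isProbabilityMeasure_tilted hgμ
  have hGibbs := integral_llr_add_sub_measure_univ_nonneg
    (hac.trans (absolutelyContinuous_tilted hgμ)) (integrable_llr_tilted_right hac hgG hllr hgμ)
  rw [integral_llr_tilted_right hac hgG hgμ hllr] at hGibbs
  rw [toReal_klDiv_of_measure_eq hac (by simp)]
  simp only [probReal_univ] at hGibbs
  linarith

lemma lintegral_ofReal_le_toReal_klDiv_add_log_integral_exp [IsProbabilityMeasure G]
    [IsProbabilityMeasure μ] (hKL : klDiv G μ ≠ ∞) {g : X → ℝ} (hg : Measurable g) (hg0 : 0 ≤ g)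
    {σ : ℝ} (hσ : 0 < σ) (hexp : Integrable (fun x => Real.exp (σ * g x)) μ) :
    ∫⁻ x, ENNReal.ofReal (g x) ∂G ≤
      ENNReal.ofReal (((klDiv G μ).toReal + Real.log (∫ x, Real.exp (σ * g x) ∂μ)) / σ) := by
  rw [lintegral_ofReal_eq_iSup_min hg]
  refine iSup_le fun n => ?_
  have hgn : Measurable fun x => min (g x) n := hg.min measurable_const
  have hgn_nonneg : ∀ x, 0 ≤ min (g x) n := fun x => le_min (hg0 x) n.cast_nonneg
  have hgn_int : Integrable (fun x => min (g x) n) G :=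
    (integrable_const (n : ℝ)).mono' hgn.aestronglyMeasurable <| ae_of_all _ fun x => by
      rw [Real.norm_of_nonneg (hgn_nonneg x)]
      exact min_le_right _ _
  have hexp_n := integrable_exp_mul_of_le hσ.le hexp hgn fun x => min_le_left _ _
  rw [← ofReal_integral_eq_lintegral_ofReal hgn_int (ae_of_all _ hgn_nonneg)]
  refine ENNReal.ofReal_le_ofReal ?_
  rw [le_div_iff₀' hσ, ← integral_const_mul]
  calc ∫ x, σ * min (g x) n ∂G
      ≤ (klDiv G μ).toReal + Real.log (∫ x, Real.exp (σ * min (g x) n) ∂μ) :=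
        integral_le_toReal_klDiv_add_log_integral_exp hKL (hgn_int.const_mul σ) hexp_n
    _ ≤ (klDiv G μ).toReal + Real.log (∫ x, Real.exp (σ * g x) ∂μ) := by
        gcongr _ + Real.log ?_
        · exact integral_exp_pos hexp_n
        · exact integral_mono hexp_n hexp fun x =>
            Real.exp_le_exp.2 (mul_le_mul_of_nonneg_left (min_le_left _ _) hσ.le)

lemma tendsto_integral_exp_mul_sub_min_natCast [IsFiniteMeasure μ] {ψ : X → ℝ} (hψ : Measurable ψ)
    (hψ0 : 0 ≤ ψ) {σ : ℝ} (hσ : 0 ≤ σ) (hint : Integrable (fun x => Real.exp (σ * ψ x)) μ) :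
    Tendsto (fun m : ℕ => ∫ x, Real.exp (σ * (ψ x - min (ψ x) m)) ∂μ) atTop (𝓝 (μ.real Set.univ)) := by
  have hlim : ∀ x, Tendsto (fun m : ℕ => Real.exp (σ * (ψ x - min (ψ x) m))) atTop (𝓝 1) := by
    intro x
    refine tendsto_const_nhds.congr' ?_
    filter_upwards [eventually_ge_atTop ⌈ψ x⌉₊] with m hm
    simp [min_eq_left ((Nat.le_ceil _).trans (Nat.cast_le.2 hm))]
  simpa using tendsto_integral_of_dominated_convergence _
    (fun m => (integrable_exp_mul_sub_min_natCast hψ hψ0 hσ hint m).1) hint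
    (fun m => ae_of_all _ fun x =>
      norm_exp_mul_le_exp_mul hσ (sub_le_self _ (le_min (hψ0 x) m.cast_nonneg)))
    (ae_of_all _ hlim)

end

theorem stmt17 {X : Type*} [MeasurableSpace X] (μ : Measure X) [IsProbabilityMeasure μ]
    (ψ : X → ℝ) (hψ : Measurable ψ) (hψ0 : ∀ x, 0 ≤ ψ x)
    (hint : ∀ σ : ℝ, 0 < σ → Integrable (fun x => Real.exp (σ * ψ x)) μ)
    (K : ℝ≥0∞) (hK : K ≠ ⊤) :
    Filter.Tendsto (fun m : ℕ =>
        ⨆ G : {G : Measure X // IsProbabilityMeasure G ∧ KL G μ ≤ K},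
          ∫⁻ x, ENNReal.ofReal (ψ x - min (ψ x) (m : ℝ)) ∂G.1)
      Filter.atTop (nhds 0) := by
  refine ENNReal.tendsto_nhds_zero.2 fun ε hε => ?_
  obtain ⟨δ, -, hδ, hδε⟩ := ENNReal.lt_iff_exists_real_btwn.1 hε
  rw [ENNReal.ofReal_pos] at hδ
  set σ := (K.toReal + 1) / δ with hσ_def
  have hσ : 0 < σ := by positivity
  have hlog : ∀ᶠ m : ℕ in atTop,
      Real.log (∫ x, Real.exp (σ * (ψ x - min (ψ x) m)) ∂μ) ≤ 1 := by
    refine ((tendsto_integral_exp_mul_sub_min_natCast hψ hψ0 hσ.le (hint σ hσ)).log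
      (by simp)).eventually_le_const ?_
    simp
  filter_upwards [hlog] with m hm
  refine iSup_le fun ⟨G, hG, hGK⟩ => ?_
  rw [KL_eq_klDiv_s17] at hGK
  calc ∫⁻ x, ENNReal.ofReal (ψ x - min (ψ x) m) ∂G
      ≤ ENNReal.ofReal (((klDiv G μ).toReal +
          Real.log (∫ x, Real.exp (σ * (ψ x - min (ψ x) m)) ∂μ)) / σ) :=
        lintegral_ofReal_le_toReal_klDiv_add_log_integral_exp (ne_top_of_le_ne_top hK hGK)
          (hψ.sub (hψ.min measurable_const)) (fun x => sub_nonneg.2 (min_le_left _ _)) hσ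
          (integrable_exp_mul_sub_min_natCast hψ hψ0 hσ.le (hint σ hσ) m)
    _ ≤ ENNReal.ofReal ((K.toReal + 1) / σ) := by gcongr
    _ = ENNReal.ofReal δ := by
        rw [hσ_def, div_div_cancel₀ (by positivity)]
    _ ≤ ε := hδε.le
end
end
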